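/- arXiv:1906.08216 — 3 statements merged into one kernel-verified Lean document; each statement's English description precedes it below -/
import Mathlib

section
/- Let m, n be positive integers with gcd(m,n)=1 and let α be a weak composition of m into n parts. Then the n cyclic shifts cyc_1(α), cyc_2(α), …, cyc_n(α) are pairwise distinct. -/
/-!
If `cyc_r α = cyc_s α`, then `α`, indexed by `ℤ/n`, is periodic with the nonzero period `s - r`,
hence also with period `g = gcd(s - r, n)`, a proper divisor of `n`. The sum `m` of `α` is then
`n / g` times the sum over one period, so `n / g > 1` divides both `m` and `n`.
-/

open Finset Polynomial

/-- The cells of the skew shape `λ/μ`. -/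
def skewCells (lam mu : YoungDiagram) : Finset (ℕ × ℕ) :=
  lam.cells \ mu.cells

/-- A semistandard Young tableau of skew shape `λ/μ`: a filling of the cells of `λ/μ`
with positive integers, weakly increasing along rows and strictly increasing down columns.
Cells outside the shape carry the value `0`. -/
structure SkewSSYT (lam mu : YoungDiagram) where
  entry : ℕ → ℕ → ℕ
  pos' : ∀ i j, (i, j) ∈ skewCells lam mu → 0 < entry i j
  zeros' : ∀ i j, (i, j) ∉ skewCells lam mu → entry i j = 0
  row_weak' : ∀ i j1 j2, j1 < j2 → (i, j1) ∈ skewCells lam mu →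
    (i, j2) ∈ skewCells lam mu → entry i j1 ≤ entry i j2
  col_strict' : ∀ i1 i2 j, i1 < i2 → (i1, j) ∈ skewCells lam mu →
    (i2, j) ∈ skewCells lam mu → entry i1 j < entry i2 j

/-- `w_k(T)`: the number of entries of `T` equal to `k`. -/
def SkewSSYT.wt {lam mu : YoungDiagram} (T : SkewSSYT lam mu) (k : ℕ) : ℕ :=
  ((skewCells lam mu).filter fun c => T.entry c.1 c.2 = k).card

/-- `SSYT(λ/μ, n)`: semistandard skew tableaux of shape `λ/μ` with all entries at most `n`. -/
def SSYTbdd (lam mu : YoungDiagram) (n : ℕ) : Set (SkewSSYT lam mu) :=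
  {T | ∀ i j, (i, j) ∈ skewCells lam mu → T.entry i j ≤ n}

/-- `SSYT(λ/μ, α)`: semistandard skew tableaux of shape `λ/μ` with exactly `α i`
entries equal to `i + 1` for each `i : Fin n` (so content `α`, entries in `{1, …, n}`). -/
def SSYTcontent (lam mu : YoungDiagram) {n : ℕ} (α : Fin n → ℕ) : Set (SkewSSYT lam mu) :=
  {T | (∀ i : Fin n, T.wt ((i : ℕ) + 1) = α i) ∧
    ∀ i j, (i, j) ∈ skewCells lam mu → T.entry i j ≤ n}

/-- The cyclic shift `cyc_r(α)`, with `cyc r α i = α ((i + r) mod n)`. -/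
def cyc {n : ℕ} (r : ℕ) (α : Fin n → ℕ) : Fin n → ℕ :=
  fun i => α ⟨((i : ℕ) + r) % n, Nat.mod_lt _ i.pos⟩

/-- `z_r = Σ_j j ⬝ α_{j+r}` (indices mod `n`): the weighted sum of the shifted composition. -/
def zwt {n : ℕ} (α : Fin n → ℕ) (r : ℕ) : ℕ :=
  ∑ j : Fin n, ((j : ℕ) + 1) * cyc r α j

/-- `Σ_{j=1}^n j ⬝ w_j(T)`. -/
def weightedSum {lam mu : YoungDiagram} (n : ℕ) (T : SkewSSYT lam mu) : ℕ :=
  ∑ j : Fin n, ((j : ℕ) + 1) * T.wt ((j : ℕ) + 1)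

/-- The (skew) Schur polynomial `s_{λ/μ}(x_1, …, x_n)` evaluated at `x`. -/
noncomputable def skewSchurEval (lam mu : YoungDiagram) (n : ℕ) {R : Type*} [CommSemiring R]
    (x : Fin n → R) : R :=
  ∑ᶠ T ∈ SSYTbdd lam mu n, ∏ i : Fin n, x i ^ T.wt ((i : ℕ) + 1)

/-- `n(λ) = Σ_j (j - 1) λ_j`, i.e. the sum of the (0-indexed) row indices of the cells. -/
def nStat (lam : YoungDiagram) : ℕ :=
  ∑ c ∈ lam.cells, c.1

open Function
open scoped Fin.NatCast

theorem Function.Periodic.nat_gcd {α : Type*} {f : ℕ → α} {p q : ℕ} (hp : Periodic f p)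
    (hq : Periodic f q) : Periodic f (p.gcd q) := by
  induction p, q using Nat.gcd.induction with
  | H0 q => simpa using hq
  | H1 p q _ ih =>
    rw [Nat.gcd_rec]
    refine ih (fun x => ?_) hp
    rw [← hp.nat_mul (q / p) (x + q % p), Nat.cast_id, add_assoc, mul_comm, Nat.mod_add_div, hq]

theorem Function.Periodic.sum_range_mul {M : Type*} [AddCommMonoid M] {f : ℕ → M} {p : ℕ}
    (h : Periodic f p) (k : ℕ) : ∑ i ∈ range (p * k), f i = k • ∑ i ∈ range p, f i := by
  induction k with
  | zero => simp
  | succ k ih =>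
    rw [Nat.mul_succ, sum_range_add, ih, succ_nsmul]
    congr 1
    refine sum_congr rfl fun x _ => ?_
    rw [add_comm, mul_comm]
    exact h.nat_mul k x

theorem Fin.natCast_injOn_Icc (n : ℕ) [NeZero n] :
    Set.InjOn (fun r : ℕ => (r : Fin n)) (Set.Icc 1 n) := by
  rintro r ⟨hr1, hrn⟩ s ⟨hs1, hsn⟩ h
  have hmod : r ≡ s [MOD n] := by simpa [Nat.ModEq, Fin.ext_iff, Fin.val_natCast] using h
  exact hmod.eq_of_abs_lt (abs_lt.mpr ⟨by omega, by omega⟩)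

theorem not_coprime_sum_of_periodic {n : ℕ} [NeZero n] {α : Fin n → ℕ} {c : Fin n}
    (hα : Periodic α c) (hc : c ≠ 0) : ¬ Nat.Coprime (∑ i, α i) n := by
  intro hcop
  set a : ℕ → ℕ := fun k => α k
  have ha_n : Periodic a n := fun x => by simp [a]
  have ha_c : Periodic a c.val := fun x => by simp [a, hα x]
  have hc0 : 0 < c.val := Nat.pos_of_ne_zero (Fin.val_ne_zero_iff.mpr hc)
  obtain ⟨k, hk⟩ := Nat.gcd_dvd_right c.val n
  have hsum : ∑ i, α i = k * ∑ i ∈ range (c.val.gcd n), a i := by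
    rw [← smul_eq_mul, ← (ha_c.nat_gcd ha_n).sum_range_mul, ← hk, ← Fin.sum_univ_eq_sum_range]
    simp [a]
  have hk1 : k = 1 :=
    Nat.eq_one_of_dvd_coprimes hcop (hsum ▸ dvd_mul_right _ _) (hk ▸ dvd_mul_left _ _)
  rw [hk1, mul_one] at hk
  exact c.isLt.not_ge (hk.trans_le (Nat.gcd_le_left n hc0))

theorem cyc_apply {n : ℕ} [NeZero n] (r : ℕ) (α : Fin n → ℕ) (i : Fin n) :
    cyc r α i = α (i + r) := by
  simp only [cyc]
  congr 1
  ext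
  simp [Fin.val_add]

theorem periodic_of_cyc_eq {n : ℕ} [NeZero n] {r s : ℕ} {α : Fin n → ℕ}
    (h : cyc r α = cyc s α) : Periodic α ((s : Fin n) - r) := by
  intro x
  have := congrFun h (x - r)
  simp only [cyc_apply, sub_add_cancel] at this
  rw [this, ← add_comm_sub]

theorem cyclicShifts_pairwise_distinct_general (m n : ℕ)
    (hgcd : Nat.gcd m n = 1) (α : Fin n → ℕ) (hα : ∑ i, α i = m) :
    ∀ r s, 1 ≤ r → r ≤ n → 1 ≤ s → s ≤ n → r ≠ s → cyc r α ≠ cyc s α := by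
  intro r s hr1 hrn hs1 hsn hrs hcyc
  have : NeZero n := ⟨by omega⟩
  have hc : (s : Fin n) - r ≠ 0 :=
    sub_ne_zero.mpr fun h => hrs (Fin.natCast_injOn_Icc n ⟨hs1, hsn⟩ ⟨hr1, hrn⟩ h).symm
  exact not_coprime_sum_of_periodic (periodic_of_cyc_eq hcyc) hc (hα ▸ hgcd)

/-- If `gcd(m, n) = 1` and `α` is a weak composition of `m` into `n` parts, then the
cyclic shifts `cyc_1 α, …, cyc_n α` are pairwise distinct. -/
theorem cyclicShifts_pairwise_distinct (m n : ℕ) (hm : 0 < m) (hn : 0 < n)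
    (hgcd : Nat.gcd m n = 1) (α : Fin n → ℕ) (hα : ∑ i, α i = m) :
    ∀ r s, 1 ≤ r → r ≤ n → 1 ≤ s → s ≤ n → r ≠ s → cyc r α ≠ cyc s α :=
  cyclicShifts_pairwise_distinct_general m n hgcd α hα
end

section
/- Let m, n be positive integers with gcd(m,n)=1 and let α be a weak composition of m into n parts. For 1 ≤ r ≤ n define z_r := Σ_{j=1}^n j·α_{j+r}, indices taken modulo n. Then in the polynomial ring ℤ[q], Σ_{r=1}^n q^{z_r} ≡ 1 + q + q² + ⋯ + q^{n−1} (mod q^n − 1). -/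
open Finset Polynomial

/-!
Every cyclic shift of `α` still sums to `m`, so `z_r ≡ c - r m (mod n)` with
`c = Σ_k k α_k`. Since `m` is invertible mod `n`, the exponents `z_1, …, z_n` run through
all residues mod `n`, and modulo `q^n - 1` each `q^z` may be replaced by `q^(z mod n)`.
-/

theorem pow_sub_one_dvd_pow_sub_pow_mod {R : Type*} [CommRing R] (a : R) (n k : ℕ) :
    a ^ n - 1 ∣ a ^ k - a ^ (k % n) := by
  have h : a ^ k - a ^ (k % n) = a ^ (k % n) * (a ^ (n * (k / n)) - 1) := by
    rw [mul_sub, mul_one, ← pow_add, Nat.mod_add_div]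
  rw [h]
  exact (pow_one_sub_dvd_pow_mul_sub_one a n (k / n)).mul_left _

theorem pow_sub_one_dvd_sum_pow_sub_sum_range_pow {ι R : Type*} [CommRing R] (a : R)
    {n : ℕ} [NeZero n] {s : Finset ι} {f : ι → ℕ}
    (hf : Set.InjOn (fun i => (f i : ZMod n)) s) (hs : #s = n) :
    a ^ n - 1 ∣ ∑ i ∈ s, a ^ f i - ∑ i ∈ range n, a ^ i := by
  have hf' : Set.InjOn (fun i => f i % n) s := fun i hi j hj h =>
    hf hi hj ((ZMod.natCast_eq_natCast_iff' _ _ _).2 h)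
  have himage : s.image (fun i => f i % n) = range n :=
    eq_of_subset_of_card_le (fun _ hk => by
      obtain ⟨i, -, rfl⟩ := mem_image.1 hk
      exact mem_range.2 (Nat.mod_lt _ (NeZero.pos n)))
      (by rw [card_range, card_image_of_injOn hf', hs])
  rw [← himage, sum_image hf', ← sum_sub_distrib]
  exact dvd_sum fun i _ => pow_sub_one_dvd_pow_sub_pow_mod a n (f i)

section CyclicShift

variable {n : ℕ} [NeZero n] (α : Fin n → ℕ)

theorem cyc_eq_comp_addRight (r : ℕ) : cyc r α = α ∘ Equiv.addRight (Fin.ofNat n r) := by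
  funext j
  simp only [cyc, Function.comp_apply, Equiv.coe_addRight]
  congr 1
  ext
  simp [Fin.val_add]

theorem natCast_zwt (r : ℕ) :
    (zwt α r : ZMod n) = ∑ k : Fin n, (((k : ℕ) : ZMod n) + 1) * α k - r * ∑ k, (α k : ZMod n) := by
  rw [eq_sub_iff_add_eq]
  let e := Equiv.addRight (Fin.ofNat n r)
  calc (zwt α r : ZMod n) + r * ∑ k, (α k : ZMod n)
      = ∑ j, ((((e j : Fin n) : ℕ) : ZMod n) + 1) * α (e j) := by
        rw [← Equiv.sum_comp e, mul_sum]
        simp only [zwt, cyc_eq_comp_addRight, Nat.cast_sum, Nat.cast_mul, Nat.cast_add,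
          Nat.cast_one, Function.comp_apply, ← sum_add_distrib]
        refine sum_congr rfl fun j _ => ?_
        simp [e, Fin.val_add]
        ring
    _ = ∑ k : Fin n, (((k : ℕ) : ZMod n) + 1) * α k :=
        Equiv.sum_comp e fun k : Fin n => (((k : ℕ) : ZMod n) + 1) * α k

theorem zwt_injOn_Icc (hα : Nat.Coprime (∑ i, α i) n) :
    Set.InjOn (fun r => (zwt α r : ZMod n)) (Icc 1 n) := by
  intro r hr s hs h
  have hmul : (r : ZMod n) * ↑(∑ i, α i) = s * ↑(∑ i, α i) := by
    simpa [natCast_zwt] using h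
  have hrs := (ZMod.natCast_eq_natCast_iff _ _ _).1
    (((ZMod.isUnit_iff_coprime _ _).2 hα).mul_right_cancel hmul)
  simp only [coe_Icc, Set.mem_Icc] at hr hs
  exact hrs.eq_of_abs_lt (abs_sub_lt_iff.2 ⟨by omega, by omega⟩)

end CyclicShift

theorem sum_pow_zwt_modEq_general (m n : ℕ) (hn : 0 < n)
    (hgcd : Nat.gcd m n = 1) (α : Fin n → ℕ) (hα : ∑ i, α i = m) :
    (X ^ n - 1 : Polynomial ℤ) ∣
      (∑ r ∈ Finset.Icc 1 n, (X : Polynomial ℤ) ^ zwt α r) -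
        ∑ i ∈ Finset.range n, (X : Polynomial ℤ) ^ i := by
  have : NeZero n := NeZero.of_pos hn
  subst hα
  exact pow_sub_one_dvd_sum_pow_sub_sum_range_pow X (zwt_injOn_Icc α hgcd) (by simp)

/-- If `gcd(m, n) = 1`, then in `ℤ[q]` one has
`Σ_{r=1}^n q^{z_r} ≡ 1 + q + ⋯ + q^{n−1} (mod q^n − 1)`. -/
theorem sum_pow_zwt_modEq (m n : ℕ) (hm : 0 < m) (hn : 0 < n)
    (hgcd : Nat.gcd m n = 1) (α : Fin n → ℕ) (hα : ∑ i, α i = m) :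
    (X ^ n - 1 : Polynomial ℤ) ∣
      (∑ r ∈ Finset.Icc 1 n, (X : Polynomial ℤ) ^ zwt α r) -
        ∑ i ∈ Finset.range n, (X : Polynomial ℤ) ^ i :=
  sum_pow_zwt_modEq_general m n hn hgcd α hα
end

section
/- Let λ/μ be a skew shape, n a positive integer, and α, β weak compositions of |λ/μ| into n parts such that β is a permutation (rearrangement) of α. Then |SSYT(λ/μ, α)| = |SSYT(λ/μ, β)|; that is, the number of semistandard Young tableaux of shape λ/μ and content α does not depend on the ordering of the entries of α. -/
/-!
Bender–Knuth involutions. Fix `k`. In a tableau, call an entry `k` or `k + 1` *free* unless it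
belongs to a vertical domino, a `k` directly above a `k + 1`. By semistandardness the free entries
of each row form a block of `a` copies of `k` followed by `b` copies of `k + 1`; replacing it by
`b` copies of `k` followed by `a` copies of `k + 1` gives again a semistandard tableau with the
same dominoes and the same free cells. This is an involution exchanging the number of entries `k`
with the number of entries `k + 1` and fixing all other multiplicities, so counts of tableaux are
invariant under adjacent transpositions of the content, and these generate the symmetric group.
-/

open Finset Polynomial

namespace Finset

variable {α : Type*}

theorem card_filter_card_filter_lt_lt [LinearOrder α] (s : Finset α) (m : ℕ) :
    #{c ∈ s | #{x ∈ s | x < c} < m} = min m #s := by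
  induction s using Finset.induction_on_max with
  | empty => simp
  | insert a s ha ih =>
    have ha' : a ∉ s := fun h => lt_irrefl a (ha a h)
    have below_a : {x ∈ insert a s | x < a} = s := by
      rw [filter_insert, if_neg (lt_irrefl a), filter_true_of_mem ha]
    have below_c : {c ∈ s | #{x ∈ insert a s | x < c} < m} = {c ∈ s | #{x ∈ s | x < c} < m} :=
      filter_congr fun c hc => by rw [filter_insert, if_neg (ha c hc).not_gt]
    rw [filter_insert, below_a, below_c, card_insert_of_notMem ha']
    split_ifs with h
    · rw [card_insert_of_notMem fun h' => ha' (mem_filter.mp h').1, ih]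
      omega
    · rw [ih]
      omega

theorem card_filter_lt_lt_card_filter_iff [LinearOrder α] {s : Finset α} {p : α → Prop}
    [DecidablePred p] (hp : ∀ a ∈ s, ∀ b ∈ s, p a → ¬ p b → a < b) {c : α} (hc : c ∈ s) :
    #{x ∈ s | x < c} < #{x ∈ s | p x} ↔ p c := by
  constructor
  · intro h
    by_contra hpc
    refine h.not_ge (card_le_card fun x hx => ?_)
    simp only [mem_filter] at hx ⊢
    exact ⟨hx.1, hp x hx.1 c hc hx.2 hpc⟩
  · intro hpc
    calc #{x ∈ s | x < c} ≤ #({x ∈ s | p x}.erase c) := card_le_card fun x hx => by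
          simp only [mem_filter, mem_erase] at hx ⊢
          exact ⟨hx.2.ne, hx.1, by_contra fun hpx => (hp c hc x hx.1 hpc hpx).not_gt hx.2⟩
      _ < #{x ∈ s | p x} := card_erase_lt_of_mem (mem_filter.mpr ⟨hc, hpc⟩)

theorem card_filter_eq_of_fiberwise {β : Type*} [DecidableEq β] {s : Finset α} (f : α → β)
    {p q : α → Prop} [DecidablePred p] [DecidablePred q]
    (h : ∀ b, #{x ∈ s | p x ∧ f x = b} = #{x ∈ s | q x ∧ f x = b}) :
    #{x ∈ s | p x} = #{x ∈ s | q x} := by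
  rw [card_eq_sum_card_fiberwise fun x hx => mem_image_of_mem f (mem_filter.mp hx).1,
    card_eq_sum_card_fiberwise fun x hx => mem_image_of_mem f (mem_filter.mp hx).1]
  exact sum_congr rfl fun b _ => by simpa only [filter_filter] using h b

end Finset

theorem mem_skewCells_of_le_of_le {lam mu : YoungDiagram} {r₁ c₁ r₂ c₂ r c : ℕ}
    (h₁ : (r₁, c₁) ∈ skewCells lam mu) (h₂ : (r₂, c₂) ∈ skewCells lam mu)
    (hr₁ : r₁ ≤ r) (hr₂ : r ≤ r₂) (hc₁ : c₁ ≤ c) (hc₂ : c ≤ c₂) :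
    (r, c) ∈ skewCells lam mu := by
  simp only [skewCells, mem_sdiff, YoungDiagram.mem_cells] at *
  exact ⟨lam.up_left_mem hr₂ hc₂ h₂.1, fun h => h₁.2 (mu.up_left_mem hr₁ hc₁ h)⟩

theorem lt_rowLen_of_mem_skewCells {lam mu : YoungDiagram} {r c : ℕ}
    (h : (r, c) ∈ skewCells lam mu) : c < lam.rowLen r :=
  YoungDiagram.mem_iff_lt_rowLen.mp (mem_sdiff.mp h).1

namespace SkewSSYT

open scoped Classical

variable {lam mu : YoungDiagram}

theorem ext {T T' : SkewSSYT lam mu} (h : T.entry = T'.entry) : T = T' := by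
  cases T
  cases T'
  cases h
  rfl

theorem col_lt_of_entry_lt (T : SkewSSYT lam mu) {r c₁ c₂ : ℕ} (h₁ : (r, c₁) ∈ skewCells lam mu)
    (h₂ : (r, c₂) ∈ skewCells lam mu) (h : T.entry r c₁ < T.entry r c₂) : c₁ < c₂ := by
  by_contra! hc
  rcases hc.eq_or_lt with rfl | hc
  · exact h.false
  · exact (T.row_weak' r c₂ c₁ hc h₂ h₁).not_gt h

def IsDomino (T : SkewSSYT lam mu) (k r c : ℕ) : Prop :=
  (r, c) ∈ skewCells lam mu ∧ (r + 1, c) ∈ skewCells lam mu ∧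
    T.entry r c = k ∧ T.entry (r + 1) c = k + 1

def IsFree (T : SkewSSYT lam mu) (k r c : ℕ) : Prop :=
  (r, c) ∈ skewCells lam mu ∧ (T.entry r c = k ∨ T.entry r c = k + 1) ∧
    ∀ r', (r' = r ∨ r' + 1 = r) → ¬ T.IsDomino k r' c

noncomputable def freeRow (T : SkewSSYT lam mu) (k r : ℕ) : Finset ℕ :=
  {c ∈ range (lam.rowLen r) | T.IsFree k r c}

noncomputable def numFreeSucc (T : SkewSSYT lam mu) (k r : ℕ) : ℕ :=
  #{c ∈ T.freeRow k r | T.entry r c = k + 1}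

noncomputable def freeRank (T : SkewSSYT lam mu) (k r c : ℕ) : ℕ :=
  #{x ∈ T.freeRow k r | x < c}

noncomputable def bkEntry (T : SkewSSYT lam mu) (k r c : ℕ) : ℕ :=
  if T.IsFree k r c then (if T.freeRank k r c < T.numFreeSucc k r then k else k + 1)
  else T.entry r c

section BenderKnuth

variable {T : SkewSSYT lam mu} {k r c : ℕ}

theorem mem_freeRow : c ∈ T.freeRow k r ↔ T.IsFree k r c := by
  simp only [freeRow, mem_filter, mem_range, and_iff_right_iff_imp]
  exact fun h => lt_rowLen_of_mem_skewCells h.1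

theorem bkEntry_of_isFree (h : T.IsFree k r c) :
    T.bkEntry k r c = if T.freeRank k r c < T.numFreeSucc k r then k else k + 1 :=
  if_pos h

theorem bkEntry_of_not_isFree (h : ¬ T.IsFree k r c) : T.bkEntry k r c = T.entry r c :=
  if_neg h

theorem bkEntry_eq_or_of_isFree (h : T.IsFree k r c) :
    T.bkEntry k r c = k ∨ T.bkEntry k r c = k + 1 := by
  rw [bkEntry_of_isFree h]
  split_ifs <;> simp

theorem bkEntry_eq_or_iff :
    (T.bkEntry k r c = k ∨ T.bkEntry k r c = k + 1) ↔ (T.entry r c = k ∨ T.entry r c = k + 1) := by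
  by_cases h : T.IsFree k r c
  · exact iff_of_true (bkEntry_eq_or_of_isFree h) h.2.1
  · rw [bkEntry_of_not_isFree h]

theorem isDomino_of_lt {r₁ r₂ : ℕ} (hr : r₁ < r₂) (h₁ : (r₁, c) ∈ skewCells lam mu)
    (h₂ : (r₂, c) ∈ skewCells lam mu) (e₁ : T.entry r₁ c = k) (e₂ : T.entry r₂ c = k + 1) :
    r₂ = r₁ + 1 ∧ T.IsDomino k r₁ c := by
  obtain rfl : r₂ = r₁ + 1 := by
    by_contra hne
    have hm := mem_skewCells_of_le_of_le h₁ h₂ (Nat.le_succ r₁) (by omega) le_rfl le_rfl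
    have := T.col_strict' r₁ (r₁ + 1) c (by omega) h₁ hm
    have := T.col_strict' (r₁ + 1) r₂ c (by omega) hm h₂
    omega
  exact ⟨rfl, h₁, h₂, e₁, e₂⟩

theorem IsFree.of_entry_eq_self {c₁ c₂ : ℕ} (hc : c₁ < c₂) (hf : T.IsFree k r c₁)
    (h₂ : (r, c₂) ∈ skewCells lam mu) (e₁ : T.entry r c₁ = k) (e₂ : T.entry r c₂ = k) :
    T.IsFree k r c₂ := by
  refine ⟨h₂, Or.inl e₂, ?_⟩
  rintro r' (rfl | rfl) ⟨-, hb, -, eb⟩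
  · have hm := mem_skewCells_of_le_of_le hf.1 hb (Nat.le_succ r') le_rfl le_rfl hc.le
    have := T.col_strict' r' (r' + 1) c₁ (Nat.lt_succ_self r') hf.1 hm
    have := T.row_weak' (r' + 1) c₁ c₂ hc hm hb
    exact hf.2.2 r' (Or.inl rfl) ⟨hf.1, hm, e₁, by omega⟩
  · omega

theorem IsFree.of_entry_eq_succ {c₁ c₂ : ℕ} (hc : c₁ < c₂) (hf : T.IsFree k r c₂)
    (h₁ : (r, c₁) ∈ skewCells lam mu) (e₁ : T.entry r c₁ = k + 1) (e₂ : T.entry r c₂ = k + 1) :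
    T.IsFree k r c₁ := by
  refine ⟨h₁, Or.inr e₁, ?_⟩
  rintro r' (rfl | rfl) ⟨ht, -, et, -⟩
  · omega
  · have hm := mem_skewCells_of_le_of_le ht hf.1 le_rfl (Nat.le_succ r') hc.le le_rfl
    have := T.row_weak' r' c₁ c₂ hc ht hm
    have := T.col_strict' r' (r' + 1) c₂ (Nat.lt_succ_self r') hm hf.1
    exact hf.2.2 r' (Or.inr rfl) ⟨hm, hf.1, by omega, e₂⟩

theorem bkEntry_row_weak (r c₁ c₂ : ℕ) (hc : c₁ < c₂) (h₁ : (r, c₁) ∈ skewCells lam mu)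
    (h₂ : (r, c₂) ∈ skewCells lam mu) : T.bkEntry k r c₁ ≤ T.bkEntry k r c₂ := by
  have hle := T.row_weak' r c₁ c₂ hc h₁ h₂
  by_cases hf₁ : T.IsFree k r c₁ <;> by_cases hf₂ : T.IsFree k r c₂
  · have : T.freeRank k r c₁ ≤ T.freeRank k r c₂ := card_le_card fun x hx => by
      simp only [mem_filter] at hx ⊢
      exact ⟨hx.1, hx.2.trans hc⟩
    rw [bkEntry_of_isFree hf₁, bkEntry_of_isFree hf₂]
    split_ifs <;> omega
  · have := hf₁.2.1
    have := bkEntry_eq_or_of_isFree hf₁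
    have : T.entry r c₂ ≠ k := fun e₂ => hf₂ (hf₁.of_entry_eq_self hc h₂ (by omega) e₂)
    rw [bkEntry_of_not_isFree hf₂]
    omega
  · have := hf₂.2.1
    have := bkEntry_eq_or_of_isFree hf₂
    have : T.entry r c₁ ≠ k + 1 := fun e₁ => hf₁ (hf₂.of_entry_eq_succ hc h₁ e₁ (by omega))
    rw [bkEntry_of_not_isFree hf₁]
    omega
  · rwa [bkEntry_of_not_isFree hf₁, bkEntry_of_not_isFree hf₂]

theorem bkEntry_col_strict (r₁ r₂ c : ℕ) (hr : r₁ < r₂) (h₁ : (r₁, c) ∈ skewCells lam mu)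
    (h₂ : (r₂, c) ∈ skewCells lam mu) : T.bkEntry k r₁ c < T.bkEntry k r₂ c := by
  have hlt := T.col_strict' r₁ r₂ c hr h₁ h₂
  -- a free cell is not covered by a domino, and a `k` above a `k + 1` forms one
  have hdom : T.IsFree k r₁ c ∨ T.IsFree k r₂ c → ¬(T.entry r₁ c = k ∧ T.entry r₂ c = k + 1) := by
    rintro hf ⟨e₁, e₂⟩
    obtain ⟨rfl, hd⟩ := isDomino_of_lt hr h₁ h₂ e₁ e₂
    rcases hf with hf | hf
    exacts [hf.2.2 r₁ (Or.inl rfl) hd, hf.2.2 r₁ (Or.inr rfl) hd]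
  by_cases hf₁ : T.IsFree k r₁ c <;> by_cases hf₂ : T.IsFree k r₂ c
  · have := hf₁.2.1
    have := hf₂.2.1
    have := hdom (Or.inl hf₁)
    omega
  · have := hf₁.2.1
    have := bkEntry_eq_or_of_isFree hf₁
    have := hdom (Or.inl hf₁)
    rw [bkEntry_of_not_isFree hf₂]
    omega
  · have := hf₂.2.1
    have := bkEntry_eq_or_of_isFree hf₂
    have := hdom (Or.inr hf₂)
    rw [bkEntry_of_not_isFree hf₁]
    omega
  · rwa [bkEntry_of_not_isFree hf₁, bkEntry_of_not_isFree hf₂]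

end BenderKnuth

/-- The Bender–Knuth involution. -/
noncomputable def bk (T : SkewSSYT lam mu) (k : ℕ) (hk : 0 < k) : SkewSSYT lam mu where
  entry := T.bkEntry k
  pos' r c h := by
    by_cases hf : T.IsFree k r c
    · have := bkEntry_eq_or_of_isFree hf
      omega
    · rw [bkEntry_of_not_isFree hf]
      exact T.pos' r c h
  zeros' r c h := by
    rw [bkEntry_of_not_isFree fun hf => h hf.1]
    exact T.zeros' r c h
  row_weak' := bkEntry_row_weak
  col_strict' := bkEntry_col_strict


section Involution

variable {T : SkewSSYT lam mu} {k r c : ℕ} {hk : 0 < k}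

@[simp] theorem bk_entry : (T.bk k hk).entry = T.bkEntry k := rfl

theorem isDomino_bk_iff : (T.bk k hk).IsDomino k r c ↔ T.IsDomino k r c := by
  constructor
  · rintro ⟨h₁, h₂, e₁, e₂⟩
    have o₁ := bkEntry_eq_or_iff.mp (Or.inl e₁)
    have o₂ := bkEntry_eq_or_iff.mp (Or.inr e₂)
    have := T.col_strict' r (r + 1) c (Nat.lt_succ_self r) h₁ h₂
    exact ⟨h₁, h₂, by omega, by omega⟩
  · intro hd
    have ⟨h₁, h₂, e₁, e₂⟩ := hd
    refine ⟨h₁, h₂, ?_, ?_⟩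
    · rwa [bk_entry, bkEntry_of_not_isFree fun hf => hf.2.2 r (Or.inl rfl) hd]
    · rwa [bk_entry, bkEntry_of_not_isFree fun hf => hf.2.2 r (Or.inr rfl) hd]

theorem isFree_bk_iff : (T.bk k hk).IsFree k r c ↔ T.IsFree k r c := by
  simp only [IsFree, isDomino_bk_iff, bk_entry, bkEntry_eq_or_iff]

theorem freeRow_bk : (T.bk k hk).freeRow k r = T.freeRow k r := by
  ext c
  rw [mem_freeRow, mem_freeRow, isFree_bk_iff]

theorem card_filter_freeRank_lt_numFreeSucc :
    #{c ∈ T.freeRow k r | T.freeRank k r c < T.numFreeSucc k r} = T.numFreeSucc k r := by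
  have hle : T.numFreeSucc k r ≤ #(T.freeRow k r) := card_filter_le _ _
  have h := card_filter_card_filter_lt_lt (T.freeRow k r) (T.numFreeSucc k r)
  rwa [min_eq_left hle] at h

theorem numFreeSucc_bk :
    (T.bk k hk).numFreeSucc k r = #{c ∈ T.freeRow k r | T.entry r c = k} := by
  have hbk : #{c ∈ T.freeRow k r | T.bkEntry k r c = k + 1} =
      #{c ∈ T.freeRow k r | ¬ T.freeRank k r c < T.numFreeSucc k r} :=
    congrArg card <| filter_congr fun c hc => by
      rw [bkEntry_of_isFree (mem_freeRow.mp hc)]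
      split_ifs with h <;> simp [h]
  have hT : #{c ∈ T.freeRow k r | T.entry r c = k} =
      #{c ∈ T.freeRow k r | ¬ T.entry r c = k + 1} :=
    congrArg card <| filter_congr fun c hc => by
      have := (mem_freeRow.mp hc).2.1
      omega
  have h₁ := card_filter_add_card_filter_not (s := T.freeRow k r)
    (fun c => T.freeRank k r c < T.numFreeSucc k r)
  have h₂ := card_filter_add_card_filter_not (s := T.freeRow k r) (fun c => T.entry r c = k + 1)
  rw [numFreeSucc, freeRow_bk, bk_entry, hbk, hT]
  rw [card_filter_freeRank_lt_numFreeSucc] at h₁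
  rw [← numFreeSucc] at h₂
  omega

theorem bk_bk : (T.bk k hk).bk k hk = T := by
  refine ext (funext fun r => funext fun c => ?_)
  change (T.bk k hk).bkEntry k r c = T.entry r c
  by_cases hf : T.IsFree k r c
  · -- in each row of `T` the free `k`s come before the free `k + 1`s
    have hrank : T.freeRank k r c < #{x ∈ T.freeRow k r | T.entry r x = k} ↔ T.entry r c = k :=
      card_filter_lt_lt_card_filter_iff (fun a ha b hb ea eb => by
        have := (mem_freeRow.mp hb).2.1
        exact T.col_lt_of_entry_lt (mem_freeRow.mp ha).1 (mem_freeRow.mp hb).1 (by omega))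
        (mem_freeRow.mpr hf)
    rw [bkEntry_of_isFree (isFree_bk_iff.mpr hf), freeRank, freeRow_bk, numFreeSucc_bk,
      ← freeRank]
    rcases hf.2.1 with e | e
    · rw [if_pos (hrank.mpr e), e]
    · rw [if_neg fun h => by have := hrank.mp h; omega, e]
  · rw [bkEntry_of_not_isFree (mt isFree_bk_iff.mp hf)]
    exact bkEntry_of_not_isFree hf

end Involution

section Weight

variable {T : SkewSSYT lam mu} {k : ℕ} {hk : 0 < k}

theorem wt_eq_card_isFree_add_card_not_isFree (S : SkewSSYT lam mu) (k v : ℕ) :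
    S.wt v = #{p ∈ skewCells lam mu | S.entry p.1 p.2 = v ∧ S.IsFree k p.1 p.2} +
      #{p ∈ skewCells lam mu | S.entry p.1 p.2 = v ∧ ¬ S.IsFree k p.1 p.2} := by
  rw [wt, ← card_filter_add_card_filter_not (fun p => S.IsFree k p.1 p.2), filter_filter,
    filter_filter]

theorem isDomino_of_not_isFree_of_entry_eq_self {r c : ℕ} (hm : (r, c) ∈ skewCells lam mu)
    (e : T.entry r c = k) (hf : ¬ T.IsFree k r c) : T.IsDomino k r c := by
  simp only [IsFree, not_and, not_forall, not_not] at hf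
  obtain ⟨r', hr', hd⟩ := hf hm (Or.inl e)
  rcases hr' with rfl | rfl
  · exact hd
  · exact absurd hd.2.2.2 (by omega)

theorem exists_isDomino_of_not_isFree_of_entry_eq_succ {r c : ℕ}
    (hm : (r, c) ∈ skewCells lam mu) (e : T.entry r c = k + 1) (hf : ¬ T.IsFree k r c) :
    ∃ r', r' + 1 = r ∧ T.IsDomino k r' c := by
  simp only [IsFree, not_and, not_forall, not_not] at hf
  obtain ⟨r', hr', hd⟩ := hf hm (Or.inr e)
  rcases hr' with rfl | rfl
  · exact absurd hd.2.2.1 (by omega)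
  · exact ⟨r', rfl, hd⟩

theorem card_not_isFree_entry_eq_self :
    #{p ∈ skewCells lam mu | T.entry p.1 p.2 = k ∧ ¬ T.IsFree k p.1 p.2} =
      #{p ∈ skewCells lam mu | T.entry p.1 p.2 = k + 1 ∧ ¬ T.IsFree k p.1 p.2} := by
  -- both sides count the vertical dominoes, by their top and by their bottom cell
  refine card_bij (fun p _ => (p.1 + 1, p.2)) ?_ ?_ ?_
  · rintro ⟨r, c⟩ hp
    simp only [mem_filter] at hp ⊢
    have hd := isDomino_of_not_isFree_of_entry_eq_self hp.1 hp.2.1 hp.2.2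
    exact ⟨hd.2.1, hd.2.2.2, fun hf => hf.2.2 r (Or.inr rfl) hd⟩
  · rintro ⟨r, c⟩ - ⟨r', c'⟩ - h
    simp only [Prod.mk.injEq, Nat.add_right_cancel_iff] at h
    rw [h.1, h.2]
  · rintro ⟨r, c⟩ hp
    simp only [mem_filter] at hp
    obtain ⟨r', rfl, hd⟩ := exists_isDomino_of_not_isFree_of_entry_eq_succ hp.1 hp.2.1 hp.2.2
    exact ⟨(r', c), mem_filter.mpr ⟨hd.1, hd.2.2.1, fun hf => hf.2.2 r' (Or.inl rfl) hd⟩, rfl⟩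

theorem card_filter_isFree_fst_eq (q : ℕ × ℕ → Prop) [DecidablePred q] (r : ℕ) :
    #{p ∈ skewCells lam mu | (q p ∧ T.IsFree k p.1 p.2) ∧ p.1 = r} =
      #{c ∈ T.freeRow k r | q (r, c)} := by
  rw [← card_map (Function.Embedding.sectR r ℕ)]
  congr 1
  ext ⟨r', c⟩
  simp only [mem_filter, mem_map, Function.Embedding.sectR_apply, mem_freeRow, Prod.mk.injEq]
  constructor
  · rintro ⟨-, ⟨hq, hf⟩, rfl⟩
    exact ⟨c, ⟨hf, hq⟩, rfl, rfl⟩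
  · rintro ⟨c, ⟨hf, hq⟩, rfl, rfl⟩
    exact ⟨hf.1, ⟨hq, hf⟩, rfl⟩

theorem card_bkEntry_eq_self_isFree :
    #{p ∈ skewCells lam mu | T.bkEntry k p.1 p.2 = k ∧ T.IsFree k p.1 p.2} =
      #{p ∈ skewCells lam mu | T.entry p.1 p.2 = k + 1 ∧ T.IsFree k p.1 p.2} := by
  refine card_filter_eq_of_fiberwise Prod.fst fun r => ?_
  rw [card_filter_isFree_fst_eq (fun p => T.bkEntry k p.1 p.2 = k),
    card_filter_isFree_fst_eq (fun p => T.entry p.1 p.2 = k + 1)]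
  calc #{c ∈ T.freeRow k r | T.bkEntry k r c = k}
      = #{c ∈ T.freeRow k r | T.freeRank k r c < T.numFreeSucc k r} :=
        congrArg card <| filter_congr fun c hc => by
          rw [bkEntry_of_isFree (mem_freeRow.mp hc)]
          split_ifs with h <;> simp [h]
    _ = #{c ∈ T.freeRow k r | T.entry r c = k + 1} := card_filter_freeRank_lt_numFreeSucc

theorem wt_bk_self : (T.bk k hk).wt k = T.wt (k + 1) := by
  have hnonfree : #{p ∈ skewCells lam mu | (T.bk k hk).entry p.1 p.2 = k ∧
      ¬ (T.bk k hk).IsFree k p.1 p.2} =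
      #{p ∈ skewCells lam mu | T.entry p.1 p.2 = k ∧ ¬ T.IsFree k p.1 p.2} :=
    congrArg card <| filter_congr fun p _ => by
      rw [isFree_bk_iff, bk_entry]
      exact and_congr_left fun hf => by rw [bkEntry_of_not_isFree hf]
  rw [wt_eq_card_isFree_add_card_not_isFree _ k, wt_eq_card_isFree_add_card_not_isFree _ k,
    hnonfree, card_not_isFree_entry_eq_self, ← card_bkEntry_eq_self_isFree]
  simp only [bk_entry, isFree_bk_iff]

theorem wt_bk_succ : (T.bk k hk).wt (k + 1) = T.wt k := by
  simpa only [bk_bk] using (wt_bk_self (T := T.bk k hk) (hk := hk)).symm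

theorem wt_bk_of_ne {v : ℕ} (h₁ : v ≠ k) (h₂ : v ≠ k + 1) : (T.bk k hk).wt v = T.wt v := by
  refine congrArg card <| filter_congr fun p _ => ?_
  by_cases hf : T.IsFree k p.1 p.2
  · have := hf.2.1
    have := bkEntry_eq_or_of_isFree hf
    simp only [bk_entry]
    omega
  · rw [bk_entry, bkEntry_of_not_isFree hf]

theorem wt_bk (v : ℕ) : (T.bk k hk).wt v = T.wt (Equiv.swap k (k + 1) v) := by
  rcases eq_or_ne v k with rfl | h₁
  · rw [Equiv.swap_apply_left, wt_bk_self]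
  rcases eq_or_ne v (k + 1) with rfl | h₂
  · rw [Equiv.swap_apply_right, wt_bk_succ]
  rw [Equiv.swap_apply_of_ne_of_ne h₁ h₂, wt_bk_of_ne h₁ h₂]

theorem bk_mem_SSYTbdd {n : ℕ} (hT : T ∈ SSYTbdd lam mu n) (hkn : k + 1 ≤ n) :
    T.bk k hk ∈ SSYTbdd lam mu n := by
  intro r c hm
  rw [bk_entry]
  by_cases hf : T.IsFree k r c
  · have := bkEntry_eq_or_of_isFree hf
    omega
  · rw [bkEntry_of_not_isFree hf]
    exact hT r c hm

end Weight

theorem bk_mem_SSYTcontent {T : SkewSSYT lam mu} {m : ℕ} {α : Fin (m + 1) → ℕ} (i : Fin m)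
    (hT : T ∈ SSYTcontent lam mu α) :
    T.bk (i + 1) (Nat.add_one_pos _) ∈ SSYTcontent lam mu (α ∘ Equiv.swap i.castSucc i.succ) := by
  refine ⟨fun j => ?_, bk_mem_SSYTbdd hT.2 (by omega)⟩
  have hinj : Function.Injective fun j : Fin (m + 1) => (j : ℕ) + 1 :=
    fun a b h => Fin.ext (Nat.succ_injective h)
  rw [wt_bk, Function.comp_apply, ← hT.1]
  exact congrArg T.wt (hinj.swap_apply i.castSucc i.succ j)

theorem card_SSYTcontent_comp_swap {m : ℕ} (α : Fin (m + 1) → ℕ) (i : Fin m) :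
    Nat.card (SSYTcontent lam mu α) =
      Nat.card (SSYTcontent lam mu (α ∘ Equiv.swap i.castSucc i.succ)) := by
  have hswap : (α ∘ Equiv.swap i.castSucc i.succ) ∘ Equiv.swap i.castSucc i.succ = α :=
    funext fun j => congrArg α (Equiv.swap_apply_self _ _ j)
  have hinv : Set.InvOn (bk · (i + 1) (Nat.add_one_pos _)) (bk · (i + 1) (Nat.add_one_pos _))
      (SSYTcontent lam mu α) (SSYTcontent lam mu (α ∘ Equiv.swap i.castSucc i.succ)) :=
    ⟨fun _ _ => bk_bk, fun _ _ => bk_bk⟩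
  refine Nat.card_congr (Set.BijOn.equiv _ (hinv.bijOn (fun T hT => bk_mem_SSYTcontent i hT)
    fun T hT => ?_))
  simpa only [hswap] using bk_mem_SSYTcontent i hT

theorem card_SSYTcontent_comp_perm {n : ℕ} (α : Fin n → ℕ) (σ : Equiv.Perm (Fin n)) :
    Nat.card (SSYTcontent lam mu α) = Nat.card (SSYTcontent lam mu (α ∘ σ)) := by
  cases n with
  | zero => rw [Subsingleton.elim (α ∘ σ) α]
  | succ m =>
    have hσ : σ ∈ Submonoid.closure (Set.range fun i : Fin m => Equiv.swap i.castSucc i.succ) := by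
      rw [Equiv.Perm.mclosure_swap_castSucc_succ]
      trivial
    induction hσ using Submonoid.closure_induction generalizing α with
    | mem τ hτ =>
      obtain ⟨i, rfl⟩ := hτ
      exact card_SSYTcontent_comp_swap α i
    | one => rfl
    | mul τ ρ _ _ hτ hρ => exact (hτ α).trans (hρ (α ∘ τ))

end SkewSSYT

theorem card_ssytContent_perm_invariant_general (lam mu : YoungDiagram)
    (n : ℕ) (α β : Fin n → ℕ) (σ : Equiv.Perm (Fin n)) (hperm : β = α ∘ σ) :
    Nat.card ↥(SSYTcontent lam mu α) = Nat.card ↥(SSYTcontent lam mu β) := by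
  subst hperm
  exact SkewSSYT.card_SSYTcontent_comp_perm α σ

/-- The number of semistandard skew tableaux of shape `λ/μ` with content `α` depends only
on the multiset of entries of `α`: permuting the content does not change the count. -/
theorem card_ssytContent_perm_invariant (lam mu : YoungDiagram) (hsub : mu ≤ lam)
    (n : ℕ) (hn : 0 < n) (α β : Fin n → ℕ) (hα : ∑ i, α i = lam.card - mu.card)
    (hβ : ∑ i, β i = lam.card - mu.card) (σ : Equiv.Perm (Fin n)) (hperm : β = α ∘ σ) :
    Nat.card ↥(SSYTcontent lam mu α) = Nat.card ↥(SSYTcontent lam mu β) :=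
  card_ssytContent_perm_invariant_general lam mu n α β σ hperm
end
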